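/- arXiv:1406.7357 — 5 statements merged into one kernel-verified Lean document; each statement's English description precedes it below -/
import Mathlib

section
/- If A ∈ ℝ^{n×n} is an H-matrix, then there exists a permutation matrix P of size 2n such that P·S is an H-matrix, where S = [[S₁,S₂],[S₂,S₁]], S₁ is the positive part of A and S₂ = A − S₁. Concretely, P is obtained from the identity by swapping rows i and i+n for each index i ≤ n with a_ii < 0 (equivalently with S_ii = 0). -/
open Matrix Finset

variable {n : ℕ}

/-- `A` is an M-matrix: positive diagonal, nonpositive off-diagonal entries,
nonsingular with entrywise nonnegative inverse. -/
def IsMMat {m : Type*} [Fintype m] [DecidableEq m] (A : Matrix m m ℝ) : Prop :=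
  (∀ i, 0 < A i i) ∧ (∀ i j, i ≠ j → A i j ≤ 0) ∧ A.det ≠ 0 ∧ ∀ i j, 0 ≤ A⁻¹ i j

/-- The comparison matrix `M(A)`: `|a_ii|` on the diagonal, `-|a_ij|` off it. -/
def cmpMat {m : Type*} [Fintype m] [DecidableEq m] (A : Matrix m m ℝ) : Matrix m m ℝ :=
  Matrix.of fun i j => if i = j then |A i j| else -|A i j|

/-- `A` is an H-matrix if its comparison matrix is an M-matrix. -/
def IsHMat {m : Type*} [Fintype m] [DecidableEq m] (A : Matrix m m ℝ) : Prop :=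
  IsMMat (cmpMat A)

/-- Strict diagonal dominance. -/
def SDD {m : Type*} [Fintype m] [DecidableEq m] (A : Matrix m m ℝ) : Prop :=
  ∀ i, ∑ j ∈ Finset.univ.erase i, |A i j| < |A i i|

/-- Generalized strict diagonal dominance: witnessed by some positive vector `x`. -/
def GSDD {m : Type*} [Fintype m] [DecidableEq m] (A : Matrix m m ℝ) : Prop :=
  ∃ x : m → ℝ, (∀ i, 0 < x i) ∧
    ∀ i, ∑ j ∈ Finset.univ.erase i, |A i j| * x j < |A i i| * x i

/-- The positive part `S₁` of `A`. -/
noncomputable def sOne (A : Matrix (Fin n) (Fin n) ℝ) : Matrix (Fin n) (Fin n) ℝ :=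
  Matrix.of fun i j => if 0 < A i j then A i j else 0

/-- The block matrix `S = [[S₁, S₂], [S₂, S₁]]` with `S₁` the positive part of `A`
and `S₂ = A - S₁`. -/
noncomputable def Smat (A : Matrix (Fin n) (Fin n) ℝ) : Matrix (Fin n ⊕ Fin n) (Fin n ⊕ Fin n) ℝ :=
  Matrix.fromBlocks (sOne A) (A - sOne A) (A - sOne A) (sOne A)

/-- A permutation matrix: a 0-1 matrix with exactly one `1` in each row and column. -/
def IsPermMatrix {m : Type*} [Fintype m] [DecidableEq m] (P : Matrix m m ℝ) : Prop :=
  (∀ i j, P i j = 0 ∨ P i j = 1) ∧ (∀ i, ∃! j, P i j = 1) ∧ (∀ j, ∃! i, P i j = 1)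

/-- The permutation matrix of size `2n` obtained from the identity by swapping rows
`i` and `i + n` for each `i ≤ n` with `a_ii ≤ 0` (i.e. `S_ii = 0`). -/
noncomputable def permP (A : Matrix (Fin n) (Fin n) ℝ) :
    Matrix (Fin n ⊕ Fin n) (Fin n ⊕ Fin n) ℝ :=
  Matrix.of fun i j =>
    match i with
    | Sum.inl k => if A k k ≤ 0 then (if j = Sum.inr k then (1 : ℝ) else 0)
                   else (if j = Sum.inl k then 1 else 0)
    | Sum.inr k => if A k k ≤ 0 then (if j = Sum.inl k then (1 : ℝ) else 0)
                   else (if j = Sum.inr k then 1 else 0)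

/-- The index map `σ` sending row `i` of `S` to the corresponding row of `A`. -/
def sig : Fin n ⊕ Fin n → Fin n := Sum.elim id id


section Aux

variable {m : Type*} [Fintype m] [DecidableEq m]

/-- A Z-matrix that is generalized strictly diagonally dominant maps nonnegative
right-hand sides only to nonnegative solutions. -/
lemma keyA (B : Matrix m m ℝ) (y : m → ℝ) (hy : ∀ i, 0 < y i)
    (hoff : ∀ i j, i ≠ j → B i j ≤ 0)
    (hdom : ∀ i, ∑ j ∈ Finset.univ.erase i, (-B i j) * y j < B i i * y i)
    (x b : m → ℝ) (hb : ∀ i, 0 ≤ b i) (hx : B.mulVec x = b) (i0 : m) : 0 ≤ x i0 := by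
  by_contra hcon
  push_neg at hcon
  obtain ⟨i, -, hi⟩ := Finset.exists_min_image Finset.univ (fun j => x j / y j) ⟨i0, mem_univ _⟩
  set t := x i / y i with ht
  have htneg : t < 0 :=
    lt_of_le_of_lt (hi i0 (mem_univ _)) (div_neg_of_neg_of_pos hcon (hy i0))
  have hxi : x i = t * y i := by
    rw [ht, div_mul_cancel₀]
    exact (hy i).ne'
  have hxj : ∀ j, t * y j ≤ x j := by
    intro j
    have h1 := hi j (mem_univ _)
    rw [ht, div_le_div_iff₀ (hy i) (hy j)] at h1
    rw [ht, div_mul_eq_mul_div, div_le_iff₀ (hy i)]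
    linarith
  have hrow : B i i * x i + ∑ j ∈ Finset.univ.erase i, B i j * x j = b i := by
    have h2 : B.mulVec x i = b i := congrFun hx i
    rw [Matrix.mulVec, dotProduct] at h2
    rw [Finset.add_sum_erase _ (fun j => B i j * x j) (mem_univ i)]
    exact h2
  have h2 : ∑ j ∈ Finset.univ.erase i, (-B i j) * x j
      = -∑ j ∈ Finset.univ.erase i, B i j * x j := by
    rw [← Finset.sum_neg_distrib]
    exact Finset.sum_congr rfl fun j _ => by ring
  have h1 : ∑ j ∈ Finset.univ.erase i, (-B i j) * x j ≤ B i i * x i := by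
    have := hb i
    linarith
  have h3 : t * ∑ j ∈ Finset.univ.erase i, (-B i j) * y j
      ≤ ∑ j ∈ Finset.univ.erase i, (-B i j) * x j := by
    rw [Finset.mul_sum]
    refine Finset.sum_le_sum fun j hj => ?_
    have hjne : j ≠ i := Finset.ne_of_mem_erase hj
    have hnn : 0 ≤ -B i j := by
      have := hoff i j hjne.symm
      linarith
    calc t * (-B i j * y j) = (-B i j) * (t * y j) := by ring
    _ ≤ (-B i j) * x j := mul_le_mul_of_nonneg_left (hxj j) hnn
  have h5 : t * (B i i * y i) < t * ∑ j ∈ Finset.univ.erase i, (-B i j) * y j :=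
    mul_lt_mul_of_neg_left (hdom i) htneg
  have hfin : B i i * x i = t * (B i i * y i) := by rw [hxi]; ring
  linarith

/-- A Z-matrix with a generalized strict diagonal dominance witness is an M-matrix. -/
lemma ZtoM (B : Matrix m m ℝ)
    (hoff : ∀ i j, i ≠ j → B i j ≤ 0)
    (y : m → ℝ) (hy : ∀ i, 0 < y i)
    (hdom : ∀ i, ∑ j ∈ Finset.univ.erase i, (-B i j) * y j < B i i * y i) :
    IsMMat B := by
  have hdiag : ∀ i, 0 < B i i := by
    intro i
    have hnn : 0 ≤ ∑ j ∈ Finset.univ.erase i, (-B i j) * y j := by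
      refine Finset.sum_nonneg fun j hj => ?_
      have hjne : j ≠ i := Finset.ne_of_mem_erase hj
      have hBnn : 0 ≤ -B i j := by
        have := hoff i j hjne.symm
        linarith
      exact mul_nonneg hBnn (hy j).le
    have hpos : 0 < B i i * y i := lt_of_le_of_lt hnn (hdom i)
    nlinarith [hy i]
  have hdet : B.det ≠ 0 := by
    intro hd
    obtain ⟨v, hv0, hv⟩ := Matrix.exists_mulVec_eq_zero_iff.mpr hd
    have hnn : ∀ i, 0 ≤ v i :=
      keyA B y hy hoff hdom v 0 (fun _ => le_refl _) hv
    have hnp : ∀ i, 0 ≤ -v i := by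
      refine keyA B y hy hoff hdom (-v) 0 (fun _ => le_refl _) ?_
      rw [Matrix.mulVec_neg, hv]
      simp
    apply hv0
    funext i
    have := hnn i
    have := hnp i
    simp only [Pi.zero_apply]
    linarith
  refine ⟨hdiag, hoff, hdet, ?_⟩
  intro i j
  have hinv : B * B⁻¹ = 1 := Matrix.mul_nonsing_inv B (Ne.isUnit hdet)
  refine keyA B y hy hoff hdom (fun k => B⁻¹ k j) (fun k => (1 : Matrix m m ℝ) k j)
    (fun k => ?_) ?_ i
  · by_cases hkj : k = j <;> simp [Matrix.one_apply, hkj]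
  · funext k
    have : (B * B⁻¹) k j = (1 : Matrix m m ℝ) k j := by rw [hinv]
    rw [← this, Matrix.mul_apply]
    rw [Matrix.mulVec, dotProduct]

/-- An H-matrix is generalized strictly diagonally dominant. -/
lemma HtoGSDD (A : Matrix m m ℝ) (h : IsHMat A) :
    ∃ x : m → ℝ, (∀ i, 0 < x i) ∧
      ∀ i, ∑ j ∈ Finset.univ.erase i, |A i j| * x j < |A i i| * x i := by
  obtain ⟨hdiag, hoff, hdet, hinvnn⟩ := h
  set M := cmpMat A with hM
  set x := M⁻¹.mulVec 1 with hxdef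
  have hx0 : ∀ i, 0 ≤ x i := by
    intro i
    rw [hxdef, Matrix.mulVec, dotProduct]
    exact Finset.sum_nonneg fun j _ => by simpa using hinvnn i j
  have hMx : M.mulVec x = 1 := by
    rw [hxdef, Matrix.mulVec_mulVec, Matrix.mul_nonsing_inv M (Ne.isUnit hdet),
      Matrix.one_mulVec]
  have hrow : ∀ i, |A i i| * x i - ∑ j ∈ Finset.univ.erase i, |A i j| * x j = 1 := by
    intro i
    have h2 : M.mulVec x i = 1 := congrFun hMx i
    rw [Matrix.mulVec, dotProduct] at h2
    rw [← Finset.add_sum_erase _ (fun j => M i j * x j) (mem_univ i)] at h2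
    have hMd : M i i = |A i i| := by simp [hM, cmpMat]
    have hMo : ∑ j ∈ Finset.univ.erase i, M i j * x j
        = -∑ j ∈ Finset.univ.erase i, |A i j| * x j := by
      rw [← Finset.sum_neg_distrib]
      refine Finset.sum_congr rfl fun j hj => ?_
      have hjne : j ≠ i := Finset.ne_of_mem_erase hj
      simp [hM, cmpMat, hjne.symm]
    rw [hMd, hMo] at h2
    simpa [Pi.one_apply, sub_eq_add_neg] using h2
  have hxpos : ∀ i, 0 < x i := by
    intro i
    rcases lt_or_ge 0 (x i) with hp | hp
    · exact hp
    · exfalso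
      have h1 := hrow i
      have h2 : |A i i| * x i ≤ 0 := mul_nonpos_of_nonneg_of_nonpos (abs_nonneg _) hp
      have h3 : 0 ≤ ∑ j ∈ Finset.univ.erase i, |A i j| * x j :=
        Finset.sum_nonneg fun j _ => mul_nonneg (abs_nonneg _) (hx0 j)
      linarith
  exact ⟨x, hxpos, fun i => by have := hrow i; linarith⟩

end Aux

section Perm

variable {n : ℕ}

open Sum in
/-- The row-swapping map realized by `permP`. -/
noncomputable def eMap (A : Matrix (Fin n) (Fin n) ℝ) : Fin n ⊕ Fin n → Fin n ⊕ Fin n :=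
  fun i => match i with
  | Sum.inl k => if A k k ≤ 0 then Sum.inr k else Sum.inl k
  | Sum.inr k => if A k k ≤ 0 then Sum.inl k else Sum.inr k

lemma permP_apply (A : Matrix (Fin n) (Fin n) ℝ) (i j : Fin n ⊕ Fin n) :
    permP A i j = if j = eMap A i then 1 else 0 := by
  cases i with
  | inl k => by_cases h : A k k ≤ 0 <;> simp [permP, eMap, h]
  | inr k => by_cases h : A k k ≤ 0 <;> simp [permP, eMap, h]

lemma mul_Smat_apply (A : Matrix (Fin n) (Fin n) ℝ) (i j : Fin n ⊕ Fin n) :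
    (permP A * Smat A) i j = Smat A (eMap A i) j := by
  rw [Matrix.mul_apply]
  have : ∀ k, permP A i k * Smat A k j
      = if k = eMap A i then Smat A k j else 0 := by
    intro k
    rw [permP_apply]
    by_cases hk : k = eMap A i <;> simp [hk]
  rw [Finset.sum_congr rfl fun k _ => this k]
  simp

lemma permP_isPerm (A : Matrix (Fin n) (Fin n) ℝ) : IsPermMatrix (permP A) := by
  have hinv : ∀ i, eMap A (eMap A i) = i := by
    intro i
    cases i with
    | inl k => by_cases h : A k k ≤ 0 <;> simp [eMap, h]
    | inr k => by_cases h : A k k ≤ 0 <;> simp [eMap, h]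
  refine ⟨fun i j => ?_, fun i => ?_, fun j => ?_⟩
  · rw [permP_apply]
    by_cases h : j = eMap A i <;> simp [h]
  · refine ⟨eMap A i, ?_, fun j hj => ?_⟩
    · simp [permP_apply]
    · replace hj : permP A i j = 1 := hj
      rw [permP_apply] at hj
      by_cases h : j = eMap A i
      · exact h
      · simp [h] at hj
  · refine ⟨eMap A j, ?_, fun i hi => ?_⟩
    · show permP A (eMap A j) j = 1
      rw [permP_apply, hinv]
      simp
    · replace hi : permP A i j = 1 := hi
      rw [permP_apply] at hi
      by_cases h : j = eMap A i
      · rw [h, hinv]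
      · simp [h] at hi

lemma sig_inl {n : ℕ} (j : Fin n) : sig (Sum.inl j) = j := rfl

lemma sig_inr {n : ℕ} (j : Fin n) : sig (Sum.inr j) = j := rfl

lemma abs_sOne_add (A : Matrix (Fin n) (Fin n) ℝ) (k j : Fin n) :
    |sOne A k j| + |A k j - sOne A k j| = |A k j| := by
  by_cases h : 0 < A k j <;> simp [sOne, h]

lemma T_diag (A : Matrix (Fin n) (Fin n) ℝ) (i : Fin n ⊕ Fin n) :
    (permP A * Smat A) i i = A (sig i) (sig i) := by
  rw [mul_Smat_apply]
  cases i with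
  | inl k =>
    by_cases h : A k k ≤ 0
    · have h2 : ¬ (0 < A k k) := not_lt.mpr h
      simp [eMap, h, Smat, sOne, sig, h2]
    · have h2 : 0 < A k k := not_le.mp h
      simp [eMap, h, Smat, sOne, sig, h2]
  | inr k =>
    by_cases h : A k k ≤ 0
    · have h2 : ¬ (0 < A k k) := not_lt.mpr h
      simp [eMap, h, Smat, sOne, sig, h2]
    · have h2 : 0 < A k k := not_le.mp h
      simp [eMap, h, Smat, sOne, sig, h2]

lemma T_row_abs (A : Matrix (Fin n) (Fin n) ℝ) (i : Fin n ⊕ Fin n) (j : Fin n) :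
    |(permP A * Smat A) i (Sum.inl j)| + |(permP A * Smat A) i (Sum.inr j)|
      = |A (sig i) j| := by
  rw [mul_Smat_apply, mul_Smat_apply]
  cases i with
  | inl k =>
    by_cases h : A k k ≤ 0
    · simp only [eMap, if_pos h, Smat, Matrix.fromBlocks_apply₂₁, Matrix.fromBlocks_apply₂₂,
        Matrix.sub_apply, sig, Sum.elim_inl, id_eq]
      rw [add_comm]
      exact abs_sOne_add A k j
    · simp only [eMap, if_neg h, Smat, Matrix.fromBlocks_apply₁₁, Matrix.fromBlocks_apply₁₂,
        Matrix.sub_apply, sig, Sum.elim_inl, id_eq]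
      exact abs_sOne_add A k j
  | inr k =>
    by_cases h : A k k ≤ 0
    · simp only [eMap, if_pos h, Smat, Matrix.fromBlocks_apply₁₁, Matrix.fromBlocks_apply₁₂,
        Matrix.sub_apply, sig, Sum.elim_inr, id_eq]
      exact abs_sOne_add A k j
    · simp only [eMap, if_neg h, Smat, Matrix.fromBlocks_apply₂₁, Matrix.fromBlocks_apply₂₂,
        Matrix.sub_apply, sig, Sum.elim_inr, id_eq]
      rw [add_comm]
      exact abs_sOne_add A k j

end Perm

theorem stmt7 (A : Matrix (Fin n) (Fin n) ℝ) (h : IsHMat A) :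
    ∃ P : Matrix (Fin n ⊕ Fin n) (Fin n ⊕ Fin n) ℝ,
      IsPermMatrix P ∧ IsHMat (P * Smat A) := by
  obtain ⟨x, hxpos, hxdom⟩ := HtoGSDD A h
  refine ⟨permP A, permP_isPerm A, ?_⟩
  set T := permP A * Smat A with hT
  refine ZtoM (cmpMat T) ?_ (fun i => x (sig i)) (fun i => hxpos (sig i)) ?_
  · intro i j hij
    simp only [cmpMat, Matrix.of_apply, if_neg hij]
    have := abs_nonneg (T i j)
    linarith
  · intro i
    have hdd : cmpMat T i i = |A (sig i) (sig i)| := by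
      have h9 : cmpMat T i i = |T i i| := by simp [cmpMat]
      rw [h9, hT, T_diag]
    have hoo : ∀ j ∈ Finset.univ.erase i, -(cmpMat T i j) * x (sig j)
        = |T i j| * x (sig j) := by
      intro j hj
      have hjne : i ≠ j := (Finset.ne_of_mem_erase hj).symm
      simp only [cmpMat, Matrix.of_apply, if_neg hjne, neg_neg]
    rw [Finset.sum_congr rfl hoo, hdd]
    have hsum : ∑ j ∈ Finset.univ.erase i, |T i j| * x (sig j)
        = (∑ j : Fin n ⊕ Fin n, |T i j| * x (sig j)) - |T i i| * x (sig i) :=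
      Finset.sum_erase_eq_sub (mem_univ i)
    have hfull : ∑ j : Fin n ⊕ Fin n, |T i j| * x (sig j)
        = ∑ j : Fin n, |A (sig i) j| * x j := by
      rw [Fintype.sum_sum_type, ← Finset.sum_add_distrib]
      refine Finset.sum_congr rfl fun j _ => ?_
      have h9 := T_row_abs A i j
      rw [← hT] at h9
      simp only [sig_inl, sig_inr]
      rw [← add_mul, h9]
    have hTdiag : |T i i| = |A (sig i) (sig i)| := by rw [hT, T_diag]
    have hAsum : ∑ j ∈ Finset.univ.erase (sig i), |A (sig i) j| * x j
        = (∑ j : Fin n, |A (sig i) j| * x j) - |A (sig i) (sig i)| * x (sig i) :=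
      Finset.sum_erase_eq_sub (mem_univ (sig i))
    have hkey := hxdom (sig i)
    rw [hsum, hfull, hTdiag]
    rw [hAsum] at hkey
    linarith
end

section
/- If A ∈ ℝ^{n×n} is an H-matrix with positive diagonal entries, then the 2n×2n matrix S = [[S₁,S₂],[S₂,S₁]] (with S₁ the positive part of A and S₂ = A − S₁) is an H-matrix. -/
open Matrix Finset

variable {n : ℕ}

lemma abs_cmpMat {m : Type*} [Fintype m] [DecidableEq m] (A : Matrix m m ℝ) (i j : m) :
    |cmpMat A i j| = |A i j| := by
  unfold cmpMat
  simp only [Matrix.of_apply]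
  split <;> simp [abs_abs]

/-- Every M-matrix is generalized strictly diagonally dominant. -/
lemma mmat_gsdd {m : Type*} [Fintype m] [DecidableEq m] {M : Matrix m m ℝ} (hM : IsMMat M) :
    ∃ x : m → ℝ, (∀ i, 0 < x i) ∧
      ∀ i, ∑ j ∈ Finset.univ.erase i, |M i j| * x j < |M i i| * x i := by
  obtain ⟨hd, hz, hdet, hinv⟩ := hM
  set x : m → ℝ := fun i => ∑ j, M⁻¹ i j with hxdef
  have h1 : M * M⁻¹ = 1 := Matrix.mul_nonsing_inv M (Ne.isUnit hdet)
  have hMx : ∀ i, ∑ j, M i j * x j = 1 := by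
    intro i
    calc ∑ j, M i j * x j = ∑ j, ∑ k, M i j * M⁻¹ j k := by
          simp [hxdef, Finset.mul_sum]
      _ = ∑ k, ∑ j, M i j * M⁻¹ j k := Finset.sum_comm
      _ = ∑ k, (M * M⁻¹) i k := by simp [Matrix.mul_apply]
      _ = 1 := by simp [h1, Matrix.one_apply]
  have hx0 : ∀ i, 0 ≤ x i := fun i => Finset.sum_nonneg fun j _ => hinv i j
  have hxpos : ∀ i, 0 < x i := by
    intro i
    rcases (hx0 i).lt_or_eq with h | h
    · exact h
    · exfalso
      have h2 := hMx i
      rw [← Finset.add_sum_erase _ _ (Finset.mem_univ i)] at h2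
      have h3 : ∑ j ∈ Finset.univ.erase i, M i j * x j ≤ 0 :=
        Finset.sum_nonpos fun j hj =>
          mul_nonpos_iff.mpr (Or.inr ⟨hz i j (Finset.ne_of_mem_erase hj).symm, hx0 j⟩)
      rw [← h] at h2
      nlinarith
  refine ⟨x, hxpos, fun i => ?_⟩
  have h2 := hMx i
  rw [← Finset.add_sum_erase _ _ (Finset.mem_univ i)] at h2
  have h3 : ∑ j ∈ Finset.univ.erase i, |M i j| * x j
      = -∑ j ∈ Finset.univ.erase i, M i j * x j := by
    rw [← Finset.sum_neg_distrib]
    refine Finset.sum_congr rfl fun j hj => ?_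
    rw [abs_of_nonpos (hz i j (Finset.ne_of_mem_erase hj).symm)]
    ring
  rw [h3, abs_of_pos (hd i)]
  nlinarith

/-- A Z-matrix with positive diagonal that is generalized strictly diagonally
dominant is an M-matrix. -/
lemma zmat_gsdd_mmat {m : Type*} [Fintype m] [DecidableEq m] {M : Matrix m m ℝ}
    (hd : ∀ i, 0 < M i i) (hz : ∀ i j, i ≠ j → M i j ≤ 0)
    (x : m → ℝ) (hxpos : ∀ i, 0 < x i)
    (hgs : ∀ i, ∑ j ∈ Finset.univ.erase i, |M i j| * x j < |M i i| * x i) :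
    IsMMat M := by
  have hdet : M.det ≠ 0 := by
    intro h0
    obtain ⟨v, hv, hMv⟩ := Matrix.exists_mulVec_eq_zero_iff.mpr h0
    obtain ⟨k, hk⟩ := Function.ne_iff.mp hv
    simp only [Pi.zero_apply] at hk
    obtain ⟨i, -, hi⟩ := Finset.univ.exists_max_image (fun j => |v j| / x j)
      ⟨k, Finset.mem_univ k⟩
    set t := |v i| / x i with htdef
    have htpos : 0 < t :=
      lt_of_lt_of_le (div_pos (abs_pos.mpr hk) (hxpos k)) (hi k (Finset.mem_univ k))
    have hvle : ∀ j, |v j| ≤ t * x j := fun j =>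
      (div_le_iff₀ (hxpos j)).mp (hi j (Finset.mem_univ j))
    have hvi : t * x i = |v i| := by
      rw [htdef]; exact div_mul_cancel₀ _ (hxpos i).ne'
    have hrow : ∑ j, M i j * v j = 0 := by
      have := congrFun hMv i
      simpa [Matrix.mulVec, dotProduct] using this
    rw [← Finset.add_sum_erase _ _ (Finset.mem_univ i)] at hrow
    have habs : |M i i| * |v i| = |∑ j ∈ Finset.univ.erase i, M i j * v j| := by
      rw [← abs_mul, show M i i * v i = -(∑ j ∈ Finset.univ.erase i, M i j * v j) by
        linarith, abs_neg]
    have hle : |∑ j ∈ Finset.univ.erase i, M i j * v j|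
        ≤ ∑ j ∈ Finset.univ.erase i, |M i j| * (t * x j) := by
      refine le_trans (Finset.abs_sum_le_sum_abs _ _) (Finset.sum_le_sum fun j _ => ?_)
      rw [abs_mul]
      exact mul_le_mul_of_nonneg_left (hvle j) (abs_nonneg _)
    have hlt : ∑ j ∈ Finset.univ.erase i, |M i j| * (t * x j) < |M i i| * (t * x i) := by
      have := hgs i
      calc ∑ j ∈ Finset.univ.erase i, |M i j| * (t * x j)
          = t * ∑ j ∈ Finset.univ.erase i, |M i j| * x j := by
            rw [Finset.mul_sum]; exact Finset.sum_congr rfl fun j _ => by ring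
        _ < t * (|M i i| * x i) := by exact (mul_lt_mul_iff_right₀ htpos).mpr this
        _ = |M i i| * (t * x i) := by ring
    rw [← hvi] at habs
    linarith
  refine ⟨hd, hz, hdet, fun p q => ?_⟩
  by_contra hneg
  push_neg at hneg
  set y : m → ℝ := fun k => M⁻¹ k q with hydef
  obtain ⟨i, -, hi⟩ := Finset.univ.exists_min_image (fun j => y j / x j)
    ⟨p, Finset.mem_univ p⟩
  set t := y i / x i with htdef
  have ht : t < 0 :=
    lt_of_le_of_lt (hi p (Finset.mem_univ p)) (div_neg_of_neg_of_pos hneg (hxpos p))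
  have hyge : ∀ j, t * x j ≤ y j := fun j =>
    (le_div_iff₀ (hxpos j)).mp (hi j (Finset.mem_univ j))
  have hyi : t * x i = y i := by
    rw [htdef]; exact div_mul_cancel₀ _ (hxpos i).ne'
  have hrow : 0 ≤ ∑ j, M i j * y j := by
    have h1 : M * M⁻¹ = 1 := Matrix.mul_nonsing_inv M (Ne.isUnit hdet)
    have h2 := congrFun (congrFun h1 i) q
    rw [Matrix.mul_apply] at h2
    rw [show (∑ j, M i j * y j) = (1 : Matrix m m ℝ) i q from h2]
    rw [Matrix.one_apply]
    split <;> norm_num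
  rw [← Finset.add_sum_erase _ _ (Finset.mem_univ i)] at hrow
  have hle : ∑ j ∈ Finset.univ.erase i, M i j * y j
      ≤ ∑ j ∈ Finset.univ.erase i, M i j * (t * x j) :=
    Finset.sum_le_sum fun j hj =>
      mul_le_mul_of_nonpos_left (hyge j) (hz i j (Finset.ne_of_mem_erase hj).symm)
  have heq : ∑ j ∈ Finset.univ.erase i, M i j * (t * x j)
      = -(t * ∑ j ∈ Finset.univ.erase i, |M i j| * x j) := by
    rw [Finset.mul_sum, ← Finset.sum_neg_distrib]
    refine Finset.sum_congr rfl fun j hj => ?_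
    rw [abs_of_nonpos (hz i j (Finset.ne_of_mem_erase hj).symm)]
    ring
  have hgsi := hgs i
  rw [abs_of_pos (hd i)] at hgsi
  rw [← hyi] at hrow
  nlinarith [mul_lt_mul_of_neg_left hgsi ht, hle, heq, hrow]

lemma sOne_abs_add (A : Matrix (Fin n) (Fin n) ℝ) (i k : Fin n) :
    |sOne A i k| + |A i k - sOne A i k| = |A i k| := by
  unfold sOne
  simp only [Matrix.of_apply]
  split
  · simp
  · simp

lemma sOne_diag (A : Matrix (Fin n) (Fin n) ℝ) (hdiag : ∀ i, 0 < A i i) (i : Fin n) :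
    sOne A i i = A i i := by
  unfold sOne
  simp [hdiag i]

lemma smat_row_sum (A : Matrix (Fin n) (Fin n) ℝ) (hdiag : ∀ i, 0 < A i i)
    (x : Fin n → ℝ) (i' : Fin n ⊕ Fin n) :
    ∑ j ∈ Finset.univ.erase i', |Smat A i' j| * x (sig j)
      = ∑ k ∈ Finset.univ.erase (sig i'), |A (sig i') k| * x k := by
  rw [Finset.sum_erase_eq_sub (Finset.mem_univ i'),
    Finset.sum_erase_eq_sub (Finset.mem_univ (sig i'))]
  have huniv : ∑ j : Fin n ⊕ Fin n, |Smat A i' j| * x (sig j)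
      = ∑ k, |A (sig i') k| * x k := by
    rw [Fintype.sum_sum_type]
    cases i' with
    | inl i =>
      simp only [Smat, Matrix.fromBlocks_apply₁₁, Matrix.fromBlocks_apply₁₂, sig,
        Sum.elim_inl, Sum.elim_inr, id, Matrix.sub_apply]
      rw [← Finset.sum_add_distrib]
      refine Finset.sum_congr rfl fun k _ => ?_
      rw [← add_mul, sOne_abs_add]
    | inr i =>
      simp only [Smat, Matrix.fromBlocks_apply₂₁, Matrix.fromBlocks_apply₂₂, sig,
        Sum.elim_inl, Sum.elim_inr, id, Matrix.sub_apply]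
      rw [add_comm, ← Finset.sum_add_distrib]
      refine Finset.sum_congr rfl fun k _ => ?_
      rw [← add_mul, sOne_abs_add]
  have hdiagterm : |Smat A i' i'| * x (sig i') = |A (sig i') (sig i')| * x (sig i') := by
    cases i' with
    | inl i =>
      simp [Smat, sig, sOne_diag A hdiag i]
    | inr i =>
      simp [Smat, sig, sOne_diag A hdiag i]
  rw [huniv, hdiagterm]

theorem stmt8 (A : Matrix (Fin n) (Fin n) ℝ) (h : IsHMat A)
    (hdiag : ∀ i, 0 < A i i) : IsHMat (Smat A) := by
  obtain ⟨x, hxpos, hgs⟩ := mmat_gsdd h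
  have hgs' : ∀ i, ∑ j ∈ Finset.univ.erase i, |A i j| * x j < |A i i| * x i := by
    intro i
    have := hgs i
    rw [abs_cmpMat] at this
    rw [show (∑ j ∈ Finset.univ.erase i, |A i j| * x j)
        = ∑ j ∈ Finset.univ.erase i, |cmpMat A i j| * x j from
      Finset.sum_congr rfl fun j _ => by rw [abs_cmpMat]]
    exact this
  have hSdiag : ∀ i' : Fin n ⊕ Fin n, 0 < |Smat A i' i'| := by
    intro i'
    cases i' with
    | inl i => simpa [Smat, sOne_diag A hdiag i] using abs_pos.mpr (hdiag i).ne'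
    | inr i => simpa [Smat, sOne_diag A hdiag i] using abs_pos.mpr (hdiag i).ne'
  refine zmat_gsdd_mmat (M := cmpMat (Smat A)) ?_ ?_ (fun i' => x (sig i'))
    (fun i' => hxpos _) ?_
  · intro i'
    simpa [cmpMat] using hSdiag i'
  · intro i' j' hne
    simp [cmpMat, hne, neg_nonpos]
  · intro i'
    have e1 : ∑ j ∈ Finset.univ.erase i', |cmpMat (Smat A) i' j| * x (sig j)
        = ∑ j ∈ Finset.univ.erase i', |Smat A i' j| * x (sig j) :=
      Finset.sum_congr rfl fun j _ => by rw [abs_cmpMat]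
    rw [e1, abs_cmpMat, smat_row_sum A hdiag x i']
    calc ∑ k ∈ Finset.univ.erase (sig i'), |A (sig i') k| * x k
        < |A (sig i') (sig i')| * x (sig i') := hgs' (sig i')
      _ = |Smat A i' i'| * x (sig i') := by
          cases i' with
          | inl i => simp [Smat, sig, sOne_diag A hdiag i]
          | inr i => simp [Smat, sig, sOne_diag A hdiag i]
end

section
/- If A ∈ ℝ^{n×n} is an M-matrix, then the 2n×2n matrix S = [[S₁,S₂],[S₂,S₁]], where S₁ is the positive part of A and S₂ = A − S₁, is an M-matrix. -/
open Matrix Finset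

variable {n : ℕ}

noncomputable def Cmat' (A : Matrix (Fin n) (Fin n) ℝ) : Matrix (Fin n) (Fin n) ℝ :=
  (2:ℝ) • Matrix.diagonal (fun i => A i i) - A

lemma Cmat'_apply (A : Matrix (Fin n) (Fin n) ℝ) (i j : Fin n) :
    Cmat' A i j = if i = j then A i i else -A i j := by
  by_cases hij : i = j
  · subst hij; simp [Cmat', Matrix.diagonal]; ring
  · simp [Cmat', Matrix.diagonal_apply_ne _ hij, hij]

lemma key' {A : Matrix (Fin n) (Fin n) ℝ} (h : IsMMat A)
    {u b : Fin n → ℝ} (hb : ∀ i, 0 ≤ b i) (hCu : Cmat' A *ᵥ u = b) :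
    ∀ i, |u i| ≤ (A⁻¹ *ᵥ b) i := by
  obtain ⟨hdiag, hoff, hdet, hinv⟩ := h
  have step1 : ∀ i, (A *ᵥ fun k => |u k|) i ≤ b i := by
    intro i
    have hrow : Cmat' A i i * u i + ∑ j ∈ Finset.univ.erase i, Cmat' A i j * u j = b i := by
      rw [Finset.add_sum_erase Finset.univ (fun j => Cmat' A i j * u j) (Finset.mem_univ i)]
      have := congrFun hCu i
      simpa [Matrix.mulVec, dotProduct] using this
    have hCii : Cmat' A i i = A i i := by rw [Cmat'_apply]; simp
    have habs : A i i * |u i| ≤ b i + ∑ j ∈ Finset.univ.erase i, (-(A i j)) * |u j| := by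
      have h2 : A i i * u i = b i - ∑ j ∈ Finset.univ.erase i, Cmat' A i j * u j := by
        rw [← hCii]; linarith [hrow]
      calc A i i * |u i| = |A i i * u i| := by
            rw [abs_mul, abs_of_pos (hdiag i)]
        _ = |b i - ∑ j ∈ Finset.univ.erase i, Cmat' A i j * u j| := by rw [h2]
        _ ≤ |b i| + |∑ j ∈ Finset.univ.erase i, Cmat' A i j * u j| := abs_sub _ _
        _ ≤ b i + ∑ j ∈ Finset.univ.erase i, |Cmat' A i j * u j| := by
            gcongr
            · rw [abs_of_nonneg (hb i)]
            · exact Finset.abs_sum_le_sum_abs _ _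
        _ = b i + ∑ j ∈ Finset.univ.erase i, (-(A i j)) * |u j| := by
            congr 1
            refine Finset.sum_congr rfl fun j hj => ?_
            have hij : i ≠ j := fun e => (Finset.ne_of_mem_erase hj) e.symm
            rw [Cmat'_apply, if_neg hij, abs_mul, abs_neg,
              abs_of_nonpos (hoff i j hij)]
    have e1 : (A *ᵥ fun k => |u k|) i
        = A i i * |u i| + ∑ j ∈ Finset.univ.erase i, A i j * |u j| := by
      simp only [Matrix.mulVec, dotProduct]
      rw [Finset.add_sum_erase Finset.univ (fun j => A i j * |u j|) (Finset.mem_univ i)]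
    have hsum : ∑ j ∈ Finset.univ.erase i, (-(A i j)) * |u j|
        = -∑ j ∈ Finset.univ.erase i, A i j * |u j| := by
      simp [neg_mul]
    rw [e1]; rw [hsum] at habs; linarith
  intro i
  have hAinv : A⁻¹ * A = 1 := Matrix.nonsing_inv_mul _ (isUnit_iff_ne_zero.mpr hdet)
  have hu : (fun k => |u k|) = A⁻¹ *ᵥ (A *ᵥ fun k => |u k|) := by
    rw [Matrix.mulVec_mulVec, hAinv, Matrix.one_mulVec]
  calc |u i| = ∑ j, A⁻¹ i j * (A *ᵥ fun k => |u k|) j := by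
        have := congrFun hu i
        simpa [Matrix.mulVec, dotProduct] using this
    _ ≤ ∑ j, A⁻¹ i j * b j :=
        Finset.sum_le_sum fun j _ => mul_le_mul_of_nonneg_left (step1 j) (hinv i j)
    _ = (A⁻¹ *ᵥ b) i := by simp [Matrix.mulVec, dotProduct]

lemma Cmat'_det_ne_zero {A : Matrix (Fin n) (Fin n) ℝ} (h : IsMMat A) :
    (Cmat' A).det ≠ 0 := by
  intro hdet0
  obtain ⟨v, hv0, hCv⟩ := Matrix.exists_mulVec_eq_zero_iff.mpr hdet0
  have hk := key' h (b := 0) (fun i => le_refl 0) hCv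
  apply hv0
  funext i
  have := hk i
  rw [Matrix.mulVec_zero] at this
  exact abs_nonpos_iff.mp (by simpa using this)

lemma Cinv_bound' {A : Matrix (Fin n) (Fin n) ℝ} (h : IsMMat A) (i j : Fin n) :
    |(Cmat' A)⁻¹ i j| ≤ A⁻¹ i j := by
  have hC : Cmat' A * (Cmat' A)⁻¹ = 1 :=
    Matrix.mul_nonsing_inv _ (isUnit_iff_ne_zero.mpr (Cmat'_det_ne_zero h))
  have hCu : Cmat' A *ᵥ (fun k => (Cmat' A)⁻¹ k j)
      = fun k => (1 : Matrix (Fin n) (Fin n) ℝ) k j := by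
    funext i'
    have := congrFun (congrFun hC i') j
    rw [Matrix.mul_apply] at this
    simpa [Matrix.mulVec, dotProduct] using this
  have hb : ∀ k, 0 ≤ (1 : Matrix (Fin n) (Fin n) ℝ) k j := by
    intro k; by_cases hk : k = j <;> simp [Matrix.one_apply, hk]
  have := key' h hb hCu i
  simpa [Matrix.mulVec, dotProduct, Matrix.one_apply, mul_ite] using this

theorem stmt9 (A : Matrix (Fin n) (Fin n) ℝ) (h : IsMMat A) :
    IsMMat (Smat A) := by
  obtain ⟨hdiag, hoff, hdet, hinv⟩ := h
  have h' : IsMMat A := ⟨hdiag, hoff, hdet, hinv⟩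
  set D : Matrix (Fin n) (Fin n) ℝ := Matrix.diagonal (fun i => A i i) with hDdef
  have hsOne : sOne A = D := by
    ext i j
    by_cases hij : i = j
    · subst hij; simp [sOne, hDdef, Matrix.diagonal, hdiag i]
    · simp [sOne, hDdef, Matrix.diagonal_apply_ne _ hij, not_lt.mpr (hoff i j hij)]
  have hC2 : (2:ℝ) • D - A = Cmat' A := rfl
  have hCC : Cmat' A * (Cmat' A)⁻¹ = 1 :=
    Matrix.mul_nonsing_inv _ (isUnit_iff_ne_zero.mpr (Cmat'_det_ne_zero h'))
  have hAA : A * A⁻¹ = 1 := Matrix.mul_nonsing_inv _ (isUnit_iff_ne_zero.mpr hdet)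
  set X := (2⁻¹:ℝ) • (A⁻¹ + (Cmat' A)⁻¹) with hXdef
  set Y := (2⁻¹:ℝ) • (A⁻¹ - (Cmat' A)⁻¹) with hYdef
  have hone2 : (1 : Matrix (Fin n) (Fin n) ℝ) + 1 = (2:ℝ) • 1 := (two_smul ℝ _).symm
  have hblk1 : D * X + (A - D) * Y = 1 := by
    rw [hXdef, hYdef, Matrix.mul_smul, Matrix.mul_smul, ← smul_add]
    have expand : D * (A⁻¹ + (Cmat' A)⁻¹) + (A - D) * (A⁻¹ - (Cmat' A)⁻¹)
        = A * A⁻¹ + ((2:ℝ) • D - A) * (Cmat' A)⁻¹ := by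
      simp only [Matrix.mul_add, Matrix.mul_sub, Matrix.sub_mul, Matrix.add_mul, add_mul, Matrix.smul_mul, smul_mul_assoc, mul_smul_comm, two_smul]
      abel
    rw [expand, hC2, hAA, hCC, hone2, smul_smul]
    norm_num
  have hblk2 : D * Y + (A - D) * X = 0 := by
    rw [hXdef, hYdef, Matrix.mul_smul, Matrix.mul_smul, ← smul_add]
    have expand : D * (A⁻¹ - (Cmat' A)⁻¹) + (A - D) * (A⁻¹ + (Cmat' A)⁻¹)
        = A * A⁻¹ - ((2:ℝ) • D - A) * (Cmat' A)⁻¹ := by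
      simp only [Matrix.mul_add, Matrix.mul_sub, Matrix.sub_mul, Matrix.add_mul, add_mul, Matrix.smul_mul, smul_mul_assoc, mul_smul_comm, two_smul]
      abel
    rw [expand, hC2, hAA, hCC, sub_self, smul_zero]
  have hblk1' : (A - D) * Y + D * X = 1 := by rw [add_comm]; exact hblk1
  have hblk2' : (A - D) * X + D * Y = 0 := by rw [add_comm]; exact hblk2
  have hST : Smat A * Matrix.fromBlocks X Y Y X = 1 := by
    rw [Smat, hsOne, Matrix.fromBlocks_multiply, hblk1, hblk2, hblk1', hblk2',
      Matrix.fromBlocks_one]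
  have hdetS : (Smat A).det ≠ 0 := by
    intro h0
    have hd := congrArg Matrix.det hST
    rw [Matrix.det_mul, Matrix.det_one, h0, zero_mul] at hd
    exact zero_ne_one hd
  have hSinv : (Smat A)⁻¹ = Matrix.fromBlocks X Y Y X := Matrix.inv_eq_right_inv hST
  have hXpos : ∀ i j, 0 ≤ X i j := by
    intro i j
    have h1 := Cinv_bound' h' i j
    have h2 := neg_abs_le ((Cmat' A)⁻¹ i j)
    rw [hXdef]
    simp only [Matrix.smul_apply, Matrix.add_apply, smul_eq_mul]
    nlinarith
  have hYpos : ∀ i j, 0 ≤ Y i j := by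
    intro i j
    have h1 := Cinv_bound' h' i j
    have h2 := le_abs_self ((Cmat' A)⁻¹ i j)
    rw [hYdef]
    simp only [Matrix.smul_apply, Matrix.sub_apply, smul_eq_mul]
    nlinarith
  refine ⟨?_, ?_, hdetS, ?_⟩
  · rintro (i | i) <;>
      simp [Smat, hsOne, Matrix.fromBlocks_apply₁₁, Matrix.fromBlocks_apply₂₂,
        hDdef, Matrix.diagonal] <;>
      exact hdiag i
  · have hoffD : ∀ i j : Fin n, i ≠ j → D i j ≤ 0 := by
      intro i j hij; rw [hDdef, Matrix.diagonal_apply_ne _ hij]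
    have hAD : ∀ i j : Fin n, (A - D) i j ≤ 0 := by
      intro i j
      by_cases hij : i = j
      · subst hij; simp [hDdef, Matrix.diagonal]
      · rw [Matrix.sub_apply, hDdef, Matrix.diagonal_apply_ne _ hij, sub_zero]
        exact hoff i j hij
    rintro (i | i) (j | j) hij <;>
      simp only [Smat, hsOne, Matrix.fromBlocks_apply₁₁, Matrix.fromBlocks_apply₁₂,
        Matrix.fromBlocks_apply₂₁, Matrix.fromBlocks_apply₂₂]
    · exact hoffD i j (by simpa using hij)
    · exact hAD i j
    · exact hAD i j
    · exact hoffD i j (by simpa using hij)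
  · rintro (i | i) (j | j) <;>
      rw [hSinv] <;>
      simp only [Matrix.fromBlocks_apply₁₁, Matrix.fromBlocks_apply₁₂,
        Matrix.fromBlocks_apply₂₁, Matrix.fromBlocks_apply₂₂]
    · exact hXpos i j
    · exact hYpos i j
    · exact hYpos i j
    · exact hXpos i j
end

section
/- If A ∈ ℝ^{n×n} is strictly diagonally dominant, then there exists a permutation matrix P of size 2n such that P·S is strictly diagonally dominant, where S = [[S₁,S₂],[S₂,S₁]] with S₁ the positive part of A and S₂ = A − S₁. -/
open Matrix Finset

variable {n : ℕ}

noncomputable def swapFun (A : Matrix (Fin n) (Fin n) ℝ) : Fin n ⊕ Fin n → Fin n ⊕ Fin n :=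
  fun i => match i with
  | Sum.inl k => if A k k ≤ 0 then Sum.inr k else Sum.inl k
  | Sum.inr k => if A k k ≤ 0 then Sum.inl k else Sum.inr k

lemma swapFun_invol (A : Matrix (Fin n) (Fin n) ℝ) :
    Function.Involutive (swapFun A) := by
  intro i
  cases i with
  | inl k => by_cases h : A k k ≤ 0 <;> simp [swapFun, h]
  | inr k => by_cases h : A k k ≤ 0 <;> simp [swapFun, h]

lemma abs_split (a : ℝ) :
    |(if 0 < a then a else 0)| + |a - (if 0 < a then a else 0)| = |a| := by
  split_ifs with h
  · simp [abs_of_pos h]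
  · simp

lemma smat_rowsum (A : Matrix (Fin n) (Fin n) ℝ) (r : Fin n ⊕ Fin n) :
    ∑ j : Fin n ⊕ Fin n, |Smat A r j| = ∑ j', |A (sig r) j'| := by
  cases r with
  | inl k =>
      rw [Fintype.sum_sum_type]
      simp only [Smat, Matrix.fromBlocks_apply₁₁, Matrix.fromBlocks_apply₁₂, sig,
        Sum.elim_inl, id, Matrix.sub_apply, sOne, Matrix.of_apply]
      rw [← Finset.sum_add_distrib]
      exact Finset.sum_congr rfl fun j _ => abs_split _
  | inr k =>
      rw [Fintype.sum_sum_type]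
      simp only [Smat, Matrix.fromBlocks_apply₂₁, Matrix.fromBlocks_apply₂₂, sig,
        Sum.elim_inr, id, Matrix.sub_apply, sOne, Matrix.of_apply]
      rw [add_comm, ← Finset.sum_add_distrib]
      exact Finset.sum_congr rfl fun j _ => abs_split _

theorem stmt11 (A : Matrix (Fin n) (Fin n) ℝ) (h : SDD A) :
    ∃ P : Matrix (Fin n ⊕ Fin n) (Fin n ⊕ Fin n) ℝ,
      IsPermMatrix P ∧ SDD (P * Smat A) := by
  classical
  set σ := swapFun A with hσ
  have hinv := swapFun_invol A
  refine ⟨Matrix.of fun i j => if j = σ i then (1 : ℝ) else 0, ?_, ?_⟩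
  · refine ⟨fun i j => ?_, fun i => ?_, fun j => ?_⟩
    · by_cases hj : j = σ i <;> simp [hj]
    · refine ⟨σ i, by simp, fun j hj => ?_⟩
      by_contra hne
      simp [hne] at hj
    · refine ⟨σ j, by simp only [Matrix.of_apply]; exact if_pos (hinv j).symm, fun i hi => ?_⟩
      by_cases hji : j = σ i
      · rw [hji]; exact (hinv i).symm
      · simp [hji] at hi
  · have hmul : ∀ i j, (Matrix.of (fun i j => if j = σ i then (1 : ℝ) else 0) * Smat A) i j
        = Smat A (σ i) j := by
      intro i j
      simp only [Matrix.mul_apply, Matrix.of_apply, ite_mul, one_mul, zero_mul]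
      rw [Finset.sum_ite_eq' Finset.univ (σ i) (fun l => Smat A l j)]
      simp
    intro i
    have hdiag : Smat A (σ i) i = A (sig i) (sig i) := by
      cases i with
      | inl k =>
          by_cases hk : A k k ≤ 0
          · simp [hσ, swapFun, hk, Smat, sOne, sig, not_lt.mpr hk]
          · simp [hσ, swapFun, hk, Smat, sOne, sig, lt_of_not_ge hk]
      | inr k =>
          by_cases hk : A k k ≤ 0
          · simp [hσ, swapFun, hk, Smat, sOne, sig, not_lt.mpr hk]
          · simp [hσ, swapFun, hk, Smat, sOne, sig, lt_of_not_ge hk]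
    have hrow := smat_rowsum A (σ i)
    have hsig : sig (σ i) = sig i := by
      cases i with
      | inl k => by_cases hk : A k k ≤ 0 <;> simp [hσ, swapFun, hk, sig]
      | inr k => by_cases hk : A k k ≤ 0 <;> simp [hσ, swapFun, hk, sig]
    have hA := h (sig i)
    have hAsum : ∑ j', |A (sig i) j'| - |A (sig i) (sig i)| < |A (sig i) (sig i)| := by
      rw [← Finset.sum_erase_eq_sub (Finset.mem_univ (sig i))]
      exact hA
    calc ∑ j ∈ Finset.univ.erase i, |(Matrix.of (fun i j => if j = σ i then (1:ℝ) else 0) * Smat A) i j|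
        = ∑ j ∈ Finset.univ.erase i, |Smat A (σ i) j| := by
          exact Finset.sum_congr rfl fun j _ => by rw [hmul]
      _ = ∑ j : Fin n ⊕ Fin n, |Smat A (σ i) j| - |Smat A (σ i) i| :=
          Finset.sum_erase_eq_sub (Finset.mem_univ i)
      _ = ∑ j', |A (sig i) j'| - |A (sig i) (sig i)| := by rw [hrow, hsig, hdiag]
      _ < |A (sig i) (sig i)| := hAsum
      _ = |(Matrix.of (fun i j => if j = σ i then (1:ℝ) else 0) * Smat A) i i| := by
          rw [hmul, hdiag]
end

section
/- If A is generalized strictly diagonally dominant via a positive vector x ∈ ℝ^n, then the stacked vector x̃ = (x, x) ∈ ℝ^{2n} witnesses generalized strict diagonal dominance of the permuted matrix P·S, i.e., |(PS)_{ii}| x̃_i > Σ_{j≠i} |(PS)_{ij}| x̃_j for all i = 1,…,2n. -/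
open Matrix Finset

variable {n : ℕ}

lemma absSplit (A : Matrix (Fin n) (Fin n) ℝ) (k j : Fin n) :
    |sOne A k j| + |(A - sOne A) k j| = |A k j| := by
  simp only [sOne, Matrix.sub_apply, Matrix.of_apply]
  split_ifs with h
  · simp [abs_of_pos h]
  · simp

lemma keyLem (A : Matrix (Fin n) (Fin n) ℝ) (x : Fin n → ℝ)
    (hdom : ∀ i, ∑ j ∈ Finset.univ.erase i, |A i j| * x j < |A i i| * x i)
    (k : Fin n) (g : Fin n ⊕ Fin n → ℝ) (i : Fin n ⊕ Fin n)
    (hix : Sum.elim x x i = x k)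
    (hsum : ∀ j, |g (Sum.inl j)| + |g (Sum.inr j)| = |A k j|)
    (hdiag : |g i| = |A k k|) :
    ∑ j ∈ Finset.univ.erase i, |g j| * Sum.elim x x j < |g i| * Sum.elim x x i := by
  have htot : ∑ j ∈ Finset.univ.erase i, |g j| * Sum.elim x x j + |g i| * Sum.elim x x i
      = ∑ j, |g j| * Sum.elim x x j := Finset.sum_erase_add _ _ (Finset.mem_univ i)
  have h2 : ∑ j, |g j| * Sum.elim x x j = ∑ j, |A k j| * x j := by
    rw [Fintype.sum_sum_type]
    simp only [Sum.elim_inl, Sum.elim_inr]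
    rw [← Finset.sum_add_distrib]
    exact Finset.sum_congr rfl fun j _ => by rw [← add_mul, hsum]
  have h3 : ∑ j, |A k j| * x j
      = ∑ j ∈ Finset.univ.erase k, |A k j| * x j + |A k k| * x k :=
    (Finset.sum_erase_add _ _ (Finset.mem_univ k)).symm
  have h4 := hdom k
  rw [hdiag, hix] at htot ⊢
  linarith

theorem stmt19 (A : Matrix (Fin n) (Fin n) ℝ) (x : Fin n → ℝ)
    (hx : ∀ i, 0 < x i)
    (hdom : ∀ i, ∑ j ∈ Finset.univ.erase i, |A i j| * x j < |A i i| * x i) :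
    ∀ i : Fin n ⊕ Fin n,
      ∑ j ∈ Finset.univ.erase i, |(permP A * Smat A) i j| * Sum.elim x x j <
        |(permP A * Smat A) i i| * Sum.elim x x i := by 
  intro i
  cases i with
  | inl k =>
    by_cases h : A k k ≤ 0
    · have hmul : ∀ j, (permP A * Smat A) (Sum.inl k) j = Smat A (Sum.inr k) j := by
        intro j
        simp [Matrix.mul_apply, permP, h, ite_mul, one_mul, zero_mul]
      simp only [hmul]
      refine keyLem A x hdom k _ (Sum.inl k) rfl (fun j => ?_) ?_
      · rw [show (Smat A (Sum.inr k) (Sum.inl j)) = (A - sOne A) k j from rfl,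
          show (Smat A (Sum.inr k) (Sum.inr j)) = sOne A k j from rfl, add_comm,
          absSplit]
      · rw [show (Smat A (Sum.inr k) (Sum.inl k)) = (A - sOne A) k k from rfl]
        simp [sOne, not_lt.2 h]
    · have hmul : ∀ j, (permP A * Smat A) (Sum.inl k) j = Smat A (Sum.inl k) j := by
        intro j
        simp [Matrix.mul_apply, permP, h, ite_mul, one_mul, zero_mul]
      simp only [hmul]
      refine keyLem A x hdom k _ (Sum.inl k) rfl (fun j => ?_) ?_
      · rw [show (Smat A (Sum.inl k) (Sum.inl j)) = sOne A k j from rfl,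
          show (Smat A (Sum.inl k) (Sum.inr j)) = (A - sOne A) k j from rfl, absSplit]
      · rw [show (Smat A (Sum.inl k) (Sum.inl k)) = sOne A k k from rfl]
        simp [sOne, lt_of_not_ge h]
  | inr k =>
    by_cases h : A k k ≤ 0
    · have hmul : ∀ j, (permP A * Smat A) (Sum.inr k) j = Smat A (Sum.inl k) j := by
        intro j
        simp [Matrix.mul_apply, permP, h, ite_mul, one_mul, zero_mul]
      simp only [hmul]
      refine keyLem A x hdom k _ (Sum.inr k) rfl (fun j => ?_) ?_
      · rw [show (Smat A (Sum.inl k) (Sum.inl j)) = sOne A k j from rfl,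
          show (Smat A (Sum.inl k) (Sum.inr j)) = (A - sOne A) k j from rfl, absSplit]
      · rw [show (Smat A (Sum.inl k) (Sum.inr k)) = (A - sOne A) k k from rfl]
        simp [sOne, not_lt.2 h]
    · have hmul : ∀ j, (permP A * Smat A) (Sum.inr k) j = Smat A (Sum.inr k) j := by
        intro j
        simp [Matrix.mul_apply, permP, h, ite_mul, one_mul, zero_mul]
      simp only [hmul]
      refine keyLem A x hdom k _ (Sum.inr k) rfl (fun j => ?_) ?_
      · rw [show (Smat A (Sum.inr k) (Sum.inl j)) = (A - sOne A) k j from rfl,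
          show (Smat A (Sum.inr k) (Sum.inr j)) = sOne A k j from rfl, add_comm, absSplit]
      · rw [show (Smat A (Sum.inr k) (Sum.inr k)) = sOne A k k from rfl]
        simp [sOne, lt_of_not_ge h]
end
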